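/- arXiv:1109.2815 — 2 statements merged into one kernel-verified Lean document; each statement's English description precedes it below -/
import Mathlib

section
/- Let R = k[x,y,z] be the standard graded polynomial ring over a field k and let I ⊆ R be a homogeneous ideal of codimension 2 generated by 3 linearly independent forms of degree d ≥ 1 such that I_d = (I^sat)_d. If the ideal I^sat is integrally closed, then I^sat equals the integral closure Ī of I. (In particular, for a plane rational map without fixed part whose base ideal I satisfies I_d = (I^sat)_d, if the fat ideal ⋂_j ℘_j^{μ_j} associated to the proper base points equals I^sat, then that fat ideal is the integral closure of I.) -/
open MvPolynomial

/-- `R = k[x₀,x₁,x₂]`, the standard graded polynomial ring in three variables. -/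
abbrev Rk (k : Type) [Field k] := MvPolynomial (Fin 3) k

/-- The irrelevant maximal ideal `m = (x₀,x₁,x₂)`. -/
noncomputable def mm (k : Type) [Field k] : Ideal (Rk k) :=
  Ideal.span (Set.range X)

/-- The saturation `I^sat = I : m^∞`. -/
noncomputable def sat {k : Type} [Field k] (I : Ideal (Rk k)) : Ideal (Rk k) :=
  ⨆ s : ℕ, Submodule.colon I (((mm k) ^ s : Ideal (Rk k)) : Set (Rk k))

/-- `f` is homogeneous of (integer) degree `n`; for `n < 0` this means `f = 0`. -/
def HomZ {k : Type} [Field k] (f : Rk k) (n : ℤ) : Prop :=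
  if 0 ≤ n then f.IsHomogeneous n.toNat else f = 0

/-- `k`-dimension of the degree-`μ` graded piece of a homogeneous ideal
(`0` in negative degrees). -/
noncomputable def pieceDim {k : Type} [Field k] (J : Ideal (Rk k)) (μ : ℤ) : ℕ :=
  if 0 ≤ μ then Module.finrank k
    ↥((homogeneousSubmodule (Fin 3) k μ.toNat) ⊓ (Submodule.restrictScalars k J))
  else 0

/-- The height (codimension) of an ideal: the infimum of the heights of the
prime ideals containing it. -/
noncomputable def htI {A : Type} [CommRing A] (I : Ideal A) : ℕ∞ :=
  ⨅ (p : PrimeSpectrum A) (_ : I ≤ p.asIdeal), Order.height p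

/-- `x` is integral over the ideal `I`: it satisfies an equation of integral
dependence `x^m + a₁ x^{m-1} + ⋯ + a_m = 0` with `a_i ∈ I^i`.  The integral
closure of `I` is the set of all such elements. -/
def IdealIntegral {A : Type} [CommRing A] (I : Ideal A) (x : A) : Prop :=
  ∃ (m : ℕ) (a : Fin m → A), 0 < m ∧ (∀ i : Fin m, a i ∈ I ^ ((i : ℕ) + 1)) ∧
    x ^ m + ∑ i : Fin m, a i * x ^ (m - ((i : ℕ) + 1)) = 0

/-!
Every nonzero form in `I^sat` has degree at least `d`: a form `g` of degree `e < d` can be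
multiplied up to degree `d - 1`, and then `g x₀, g x₁, g x₂` span the three-dimensional space
`I_d`, so either `m ⊆ I` (height `3`) or `I ⊆ (g)` (height `≤ 1` by Krull).  Hence if
`x m^s ⊆ I`, every homogeneous component of `x` maps `m^s` into `I_{≥ d+s} ⊆ I m^s`, so
`x m^s ⊆ I m^s` and the determinant trick makes `x` integral over `I`.  Conversely an element
integral over `I` is integral over `I^sat`, which is integrally closed.
-/
open scoped Pointwise

namespace MvPolynomial

section Homogeneous

variable {σ R : Type*} [CommSemiring R]

attribute [local instance] MvPolynomial.gradedAlgebra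

theorem homogeneousComponent_add_mul {c f : MvPolynomial σ R} {d : ℕ}
    (hf : f.IsHomogeneous d) (n : ℕ) :
    homogeneousComponent (n + d) (c * f) = homogeneousComponent n c * f := by
  simpa only [DirectSum.decompose, Equiv.coe_fn_mk, decomposition.decompose'_apply] using
    DirectSum.coe_decompose_mul_add_of_right_mem (homogeneousSubmodule σ R) (a := c) (i := n) hf

theorem span_X_pow_eq_span_homogeneousSubmodule (s : ℕ) :
    Ideal.span (Set.range (X : σ → MvPolynomial σ R)) ^ s =
      Ideal.span (homogeneousSubmodule σ R s : Set (MvPolynomial σ R)) := by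
  have hk : homogeneousSubmodule σ R s = Submodule.span R (Set.range X ^ s) := by
    rw [← homogeneousSubmodule_one_pow, homogeneousSubmodule_one_eq_span_X, Submodule.span_pow]
  rw [Ideal.span, Submodule.span_pow, hk]
  apply le_antisymm
  · exact Submodule.span_mono Submodule.subset_span
  · rw [Submodule.span_le]
    exact Submodule.span_le_restrictScalars R _ _

theorem mem_colon_span_X_pow_iff {J : Ideal (MvPolynomial σ R)} {x : MvPolynomial σ R} {s : ℕ} :
    x ∈ Submodule.colon J
        ((Ideal.span (Set.range X) ^ s : Ideal (MvPolynomial σ R)) : Set (MvPolynomial σ R)) ↔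
      ∀ p : MvPolynomial σ R, p.IsHomogeneous s → x * p ∈ J := by
  rw [span_X_pow_eq_span_homogeneousSubmodule, Ideal.colon_span, Submodule.mem_colon]
  rfl

theorem mem_span_X_pow_of_isHomogeneous {p : MvPolynomial σ R} {s : ℕ}
    (hp : p.IsHomogeneous s) : p ∈ Ideal.span (Set.range (X : σ → MvPolynomial σ R)) ^ s := by
  rw [span_X_pow_eq_span_homogeneousSubmodule]
  exact Ideal.subset_span hp

variable {ι : Type*} {f : ι → MvPolynomial σ R} {d : ℕ}

theorem homogeneousComponent_mem_span_range (hf : ∀ i, (f i).IsHomogeneous d)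
    {y : MvPolynomial σ R} (hy : y ∈ Ideal.span (Set.range f)) (n : ℕ) :
    homogeneousComponent n y ∈ Ideal.span (Set.range f) :=
  homogeneousComponent_mem_of_mem
    (Ideal.homogeneous_span _ _ (by rintro _ ⟨i, rfl⟩; exact ⟨d, hf i⟩)) hy n

theorem homogeneousComponent_mem_colon_span_X_pow (hf : ∀ i, (f i).IsHomogeneous d)
    {x : MvPolynomial σ R} {s : ℕ}
    (hx : x ∈ Submodule.colon (Ideal.span (Set.range f))
      ((Ideal.span (Set.range X) ^ s : Ideal (MvPolynomial σ R)) : Set (MvPolynomial σ R)))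
    (e : ℕ) :
    homogeneousComponent e x ∈ Submodule.colon (Ideal.span (Set.range f))
      ((Ideal.span (Set.range X) ^ s : Ideal (MvPolynomial σ R)) : Set (MvPolynomial σ R)) := by
  rw [mem_colon_span_X_pow_iff] at hx ⊢
  intro p hp
  rw [← homogeneousComponent_add_mul hp]
  exact homogeneousComponent_mem_span_range hf (hx p hp) _

variable [Fintype ι]

theorem exists_sum_mul_eq_of_isHomogeneous (hf : ∀ i, (f i).IsHomogeneous d)
    {y : MvPolynomial σ R} {n : ℕ} (hy : y ∈ Ideal.span (Set.range f))
    (hyh : y.IsHomogeneous (n + d)) :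
    ∃ c : ι → MvPolynomial σ R, (∀ i, (c i).IsHomogeneous n) ∧ ∑ i, c i * f i = y := by
  obtain ⟨c, rfl⟩ := Ideal.mem_span_range_iff_exists_fun.mp hy
  refine ⟨fun i => homogeneousComponent n (c i), fun i => homogeneousComponent_isHomogeneous _ _,
    ?_⟩
  simp only [← homogeneousComponent_add_mul (hf _), ← map_sum, homogeneousComponent_eq_self hyh]

theorem mem_span_range_mul_span_X_pow (hf : ∀ i, (f i).IsHomogeneous d)
    {y : MvPolynomial σ R} {n s : ℕ} (hy : y ∈ Ideal.span (Set.range f))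
    (hyh : y.IsHomogeneous (n + d)) (hsn : s ≤ n) :
    y ∈ Ideal.span (Set.range f) * Ideal.span (Set.range X) ^ s := by
  obtain ⟨c, hc, rfl⟩ := exists_sum_mul_eq_of_isHomogeneous hf hy hyh
  refine Ideal.sum_mem _ fun i _ => ?_
  rw [mul_comm (c i)]
  exact Ideal.mul_mem_mul (Ideal.subset_span ⟨i, rfl⟩)
    (Ideal.pow_le_pow_right hsn (mem_span_X_pow_of_isHomogeneous (hc i)))

theorem mem_span_range_of_isHomogeneous (hf : ∀ i, (f i).IsHomogeneous d)
    {y : MvPolynomial σ R} (hy : y ∈ Ideal.span (Set.range f)) (hyh : y.IsHomogeneous d) :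
    y ∈ Submodule.span R (Set.range f) := by
  obtain ⟨c, hc, rfl⟩ := exists_sum_mul_eq_of_isHomogeneous hf hy (n := 0) (by rwa [zero_add])
  refine Submodule.sum_mem _ fun i _ => ?_
  rw [← homogeneousComponent_eq_self (hc i), homogeneousComponent_zero, ← smul_eq_C_mul]
  exact Submodule.smul_mem _ _ (Submodule.subset_span ⟨i, rfl⟩)

end Homogeneous

theorem span_range_le_span_singleton_of_mul_X_mem {σ ι K : Type*} [Fintype σ]
    [Fintype ι] [Field K] {f : ι → MvPolynomial σ K} {e : ℕ}
    (hf : ∀ i, (f i).IsHomogeneous (e + 1)) (hfli : LinearIndependent K f)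
    (hcard : Fintype.card ι ≤ Fintype.card σ) {g : MvPolynomial σ K} (hg : g.IsHomogeneous e)
    (hg0 : g ≠ 0) (hgX : ∀ i, g * X i ∈ Ideal.span (Set.range f)) :
    Ideal.span (Set.range f) ≤ Ideal.span {g} := by
  set w : σ → MvPolynomial σ K := fun i => g * X i
  have hwli : LinearIndependent K w :=
    (linearIndependent_X σ K).map' (LinearMap.mulLeft K g)
      (LinearMap.ker_eq_bot.mpr (mul_right_injective₀ hg0))
  have hwf : Submodule.span K (Set.range w) ≤ Submodule.span K (Set.range f) :=
    Submodule.span_le.mpr <| Set.range_subset_iff.mpr fun i =>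
      mem_span_range_of_isHomogeneous hf (hgX i) ((hg.mul (isHomogeneous_X K i)))
  have := FiniteDimensional.span_of_finite K (Set.finite_range f)
  have hspan : Submodule.span K (Set.range w) = Submodule.span K (Set.range f) :=
    Submodule.eq_of_le_of_finrank_le hwf (by
      rw [finrank_span_eq_card hfli, finrank_span_eq_card hwli]; exact hcard)
  have hwg : Submodule.span K (Set.range w) ≤ (Ideal.span {g}).restrictScalars K :=
    Submodule.span_le.mpr <| Set.range_subset_iff.mpr fun i =>
      Ideal.mul_mem_right _ _ (Ideal.mem_span_singleton_self g)
  rw [Ideal.span_le]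
  rintro _ ⟨j, rfl⟩
  exact hwg (hspan ▸ Submodule.subset_span ⟨j, rfl⟩)

end MvPolynomial

theorem htI_eq_height {A : Type} [CommRing A] (I : Ideal A) : htI I = I.height := by
  rw [htI, Ideal.height_eq_inf_minimalPrimes]
  apply le_antisymm
  · refine le_iInf₂ fun J hJ => ?_
    have hJp : J.IsPrime := hJ.1.1
    calc ⨅ (P : PrimeSpectrum A) (_ : I ≤ P.asIdeal), Order.height P
        ≤ Order.height (⟨J, hJp⟩ : PrimeSpectrum A) :=
          iInf₂_le (⟨J, hJp⟩ : PrimeSpectrum A) hJ.1.2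
      _ = J.height := (PrimeSpectrum.height_eq_orderHeight ⟨J, hJp⟩).symm
  · refine le_iInf₂ fun P hP => ?_
    obtain ⟨Q, hQ, hQP⟩ := Ideal.exists_minimalPrimes_le hP
    calc ⨅ J ∈ I.minimalPrimes, J.height ≤ Q.height := iInf₂_le Q hQ
      _ ≤ P.asIdeal.height := Ideal.height_mono hQP
      _ = Order.height P := PrimeSpectrum.height_eq_orderHeight P

namespace MvPolynomial

variable {R : Type*} [CommRing R] [IsDomain R]

noncomputable def killVarsBelow (n i : ℕ) :
    MvPolynomial (Fin n) R →ₐ[R] MvPolynomial (Fin n) R :=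
  aeval fun j => if (j : ℕ) < i then 0 else X j

theorem ker_killVarsBelow_lt {n i i' : ℕ} (hii' : i < i') (hi' : i < n) :
    RingHom.ker (killVarsBelow (R := R) n i) < RingHom.ker (killVarsBelow n i') := by
  have hcomp : (killVarsBelow (R := R) n i').comp (killVarsBelow n i) = killVarsBelow n i' := by
    refine algHom_ext fun j => ?_
    simp only [killVarsBelow, AlgHom.comp_apply, aeval_X]
    split_ifs <;> first | rfl | omega | simp_all
  refine lt_of_le_of_ne (fun g hg => ?_) fun h => ?_
  · rw [RingHom.mem_ker] at hg ⊢
    rw [← hcomp, AlgHom.comp_apply]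
    simp [hg]
  · have hX : X ⟨i, hi'⟩ ∈ RingHom.ker (killVarsBelow (R := R) n i') := by
      simp [killVarsBelow, hii']
    rw [← h] at hX
    simp [killVarsBelow, X_ne_zero] at hX

theorem le_height_span_X (n : ℕ) :
    (n : ℕ∞) ≤ (Ideal.span (Set.range (X : Fin n → MvPolynomial (Fin n) R))).height := by
  let P : Fin (n + 1) → PrimeSpectrum (MvPolynomial (Fin n) R) := fun i =>
    ⟨RingHom.ker (killVarsBelow n i), RingHom.ker_isPrime _⟩
  have hP : StrictMono P := fun i i' h => ker_killVarsBelow_lt h (by omega)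
  have hlast : (P (Fin.last n)).asIdeal ≤ Ideal.span (Set.range X) := by
    intro g hg
    have hzero :
        (fun j : Fin n => if (j : ℕ) < n then (0 : MvPolynomial (Fin n) R) else X j) = 0 :=
      _root_.funext fun j : Fin n => if_pos j.2
    simp only [P, RingHom.mem_ker, killVarsBelow, Fin.val_last, hzero, aeval_zero,
      algebraMap_eq, C_eq_zero] at hg
    rw [← Set.image_univ, mem_ideal_span_X_image]
    intro m hm
    by_contra! h
    rw [show m = 0 from Finsupp.ext fun j => h j trivial] at hm
    exact mem_support_iff.mp hm hg
  calc (n : ℕ∞) ≤ Order.height (P (Fin.last n)) :=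
        Order.length_le_height_last (p := LTSeries.mk n P hP)
    _ = (P (Fin.last n)).asIdeal.height := (PrimeSpectrum.height_eq_orderHeight _).symm
    _ ≤ _ := Ideal.height_mono hlast

end MvPolynomial

section IntegralDependence

variable {A : Type} [CommRing A]

theorem IdealIntegral.mono {I J : Ideal A} (hIJ : I ≤ J) {x : A}
    (hx : IdealIntegral I x) : IdealIntegral J x := by
  obtain ⟨m, a, hm, ha, heq⟩ := hx
  exact ⟨m, a, hm, fun i => Ideal.pow_right_mono hIJ _ (ha i), heq⟩

theorem idealIntegral_of_monic [Nontrivial A] {I : Ideal A} {x : A}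
    {p : Polynomial A} (hp : p.Monic) (hcoeff : ∀ j, p.coeff j ∈ I ^ (p.natDegree - j))
    (hx : p.eval x = 0) : IdealIntegral I x := by
  set n := p.natDegree
  have hn : 0 < n := Nat.pos_of_ne_zero fun h => by
    rw [hp.natDegree_eq_zero.mp h, Polynomial.eval_one] at hx
    exact one_ne_zero hx
  refine ⟨n, fun i => p.coeff (n - (i + 1)), hn, fun i => ?_, ?_⟩
  · simpa only [Nat.sub_sub_self i.2] using hcoeff (n - (i + 1))
  · rw [Polynomial.eval_eq_sum_range, Finset.sum_range_succ, hp.coeff_natDegree, one_mul,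
      ← Finset.sum_range_reflect, add_comm] at hx
    rw [← hx, Fin.sum_univ_eq_sum_range (fun j => p.coeff (n - (j + 1)) * x ^ (n - (j + 1)))]
    congr 1
    exact Finset.sum_congr rfl fun j _ => by rw [Nat.sub_sub, add_comm 1 j]

theorem idealIntegral_of_mem_colon_mul [IsDomain A] {I J : Ideal A}
    (hJ : J.FG) (hJ0 : J ≠ ⊥) {x : A} (hx : x ∈ Submodule.colon (I * J) (J : Set A)) :
    IdealIntegral I x := by
  have : Module.Finite A J := Module.Finite.iff_fg.mpr hJ
  obtain ⟨p, hp, -, hcoeff, hp0⟩ :=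
    LinearMap.exists_monic_and_natDegree_eq_and_coeff_mem_pow_and_aeval_eq_zero A
      (algebraMap A (Module.End A J) x) I (by
        rintro _ ⟨y, rfl⟩
        rw [Submodule.mem_smul_top_iff, Module.algebraMap_end_apply, SetLike.val_smul]
        exact Submodule.mem_colon.mp hx y y.2)
  obtain ⟨y, hyJ, hy0⟩ := Submodule.exists_mem_ne_zero_of_ne_bot hJ0
  have hpy : p.eval x * y = 0 := by
    have := congrArg (fun φ : Module.End A J => (φ ⟨y, hyJ⟩ : A)) hp0
    simpa [Polynomial.aeval_algebraMap_apply, Module.algebraMap_end_apply] using this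
  exact idealIntegral_of_monic hp hcoeff ((mul_eq_zero.mp hpy).resolve_right hy0)

end IntegralDependence

section Saturation

variable {k : Type} [Field k]

theorem mem_sat_iff {I : Ideal (Rk k)} {x : Rk k} :
    x ∈ sat I ↔ ∃ s, x ∈ Submodule.colon I (((mm k) ^ s : Ideal (Rk k)) : Set (Rk k)) := by
  rw [sat, Submodule.mem_iSup_of_directed]
  exact Monotone.directed_le fun u v huv =>
    Submodule.colon_mono le_rfl (Ideal.pow_le_pow_right huv)

theorem le_sat (I : Ideal (Rk k)) : I ≤ sat I :=
  fun _ hx => mem_sat_iff.mpr ⟨0, Ideal.le_colon hx⟩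

theorem le_of_isHomogeneous_mem_sat {I : Ideal (Rk k)} {d : ℕ} (hht : I.height = 2)
    {f : Fin 3 → Rk k} (hf : ∀ i, (f i).IsHomogeneous d) (hfli : LinearIndependent k f)
    (hIf : I = Ideal.span (Set.range f))
    (hdeq : ∀ h : Rk k, h.IsHomogeneous d → (h ∈ I ↔ h ∈ sat I))
    {g : Rk k} {e : ℕ} (hg : g.IsHomogeneous e) (hgsat : g ∈ sat I) (hg0 : g ≠ 0) :
    d ≤ e := by
  by_contra! hlt
  obtain ⟨t, rfl⟩ := Nat.exists_eq_add_of_lt hlt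
  set g' := g * X 0 ^ t
  have hg' : g'.IsHomogeneous (e + t) := hg.mul (isHomogeneous_X_pow 0 t)
  have hg'X : ∀ i, g' * X i ∈ I := fun i =>
    (hdeq _ (hg'.mul (isHomogeneous_X k i))).mpr
      (Ideal.mul_mem_right _ _ (Ideal.mul_mem_right _ _ hgsat))
  by_cases hu : IsUnit g'
  · have hmm : mm k ≤ I := Ideal.span_le.mpr <| Set.range_subset_iff.mpr fun i =>
      (Ideal.unit_mul_mem_iff_mem I hu).mp (hg'X i)
    have := (MvPolynomial.le_height_span_X (R := k) 3).trans (Ideal.height_mono hmm)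
    rw [hht] at this
    norm_num at this
  · have hle : I ≤ Ideal.span {g'} := hIf ▸
      MvPolynomial.span_range_le_span_singleton_of_mul_X_mem hf hfli le_rfl hg'
        (mul_ne_zero hg0 (pow_ne_zero _ (X_ne_zero 0))) (hIf ▸ hg'X)
    have := (Ideal.height_mono hle).trans (Ideal.height_span_singleton_le_one hu)
    rw [hht] at this
    norm_num at this

theorem exists_mem_colon_mul_of_mem_sat {I : Ideal (Rk k)} {d : ℕ} {f : Fin 3 → Rk k}
    (hf : ∀ i, (f i).IsHomogeneous d) (hIf : I = Ideal.span (Set.range f))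
    (hlow : ∀ (e : ℕ) (g : Rk k), g.IsHomogeneous e → g ∈ sat I → g ≠ 0 → d ≤ e)
    {x : Rk k} (hx : x ∈ sat I) :
    ∃ s, x ∈ Submodule.colon (I * mm k ^ s) ((mm k ^ s : Ideal (Rk k)) : Set (Rk k)) := by
  obtain ⟨s, hs⟩ := mem_sat_iff.mp hx
  subst hIf
  have hcomp := MvPolynomial.homogeneousComponent_mem_colon_span_X_pow hf hs
  refine ⟨s, ?_⟩
  rw [← sum_homogeneousComponent x]
  refine Submodule.sum_mem _ fun e _ => ?_
  rcases eq_or_ne (homogeneousComponent e x) 0 with h0 | h0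
  · rw [h0]
    exact Submodule.zero_mem _
  obtain ⟨n, hn⟩ := Nat.exists_eq_add_of_le
    (hlow e _ (homogeneousComponent_isHomogeneous e x) (mem_sat_iff.mpr ⟨s, hcomp e⟩) h0)
  have hes := MvPolynomial.mem_colon_span_X_pow_iff.mp (hcomp e)
  refine MvPolynomial.mem_colon_span_X_pow_iff.mpr fun p hp => ?_
  refine MvPolynomial.mem_span_range_mul_span_X_pow hf (hes p hp) (n := n + s) ?_ le_add_self
  rw [show n + s + d = e + s by omega]
  exact (homogeneousComponent_isHomogeneous e x).mul hp

end Saturation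

theorem stmt15_general (k : Type) [Field k] (I : Ideal (Rk k)) (d : ℕ)
    (hht : htI I = 2)
    (f : Fin 3 → Rk k) (hfhom : ∀ i, (f i).IsHomogeneous d)
    (hfli : LinearIndependent k f) (hIf : I = Ideal.span (Set.range f))
    -- `I_d = (I^sat)_d`
    (hdeq : ∀ h : Rk k, h.IsHomogeneous d → (h ∈ I ↔ h ∈ sat I))
    -- `I^sat` is integrally closed
    (hic : ∀ x : Rk k, IdealIntegral (sat I) x → x ∈ sat I) :
    ∀ x : Rk k, x ∈ sat I ↔ IdealIntegral I x := by
  intro x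
  refine ⟨fun hx => ?_, fun hx => hic x (hx.mono (le_sat I))⟩
  rw [htI_eq_height] at hht
  obtain ⟨s, hs⟩ := exists_mem_colon_mul_of_mem_sat hfhom hIf
    (fun _ _ => le_of_isHomogeneous_mem_sat hht hfhom hfli hIf hdeq) hx
  have hX : X 0 ^ s ∈ mm k ^ s := Ideal.pow_mem_pow (Ideal.subset_span (Set.mem_range_self 0)) s
  exact idealIntegral_of_mem_colon_mul (IsNoetherian.noetherian _)
    ((Submodule.ne_bot_iff _).mpr ⟨_, hX, pow_ne_zero _ (X_ne_zero 0)⟩) hs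

/-- Let `R = k[x,y,z]` and let `I ⊆ R` be a homogeneous ideal
of codimension `2` generated by `3` linearly independent forms of degree
`d ≥ 1` such that `I_d = (I^sat)_d`.  If `I^sat` is integrally closed, then
`I^sat` equals the integral closure of `I`.  (In particular, for a plane
rational map without fixed part whose base ideal `I` satisfies
`I_d = (I^sat)_d`, if the fat ideal associated to the proper base points equals
`I^sat`, then that fat ideal is the integral closure of `I`.) -/
theorem stmt15 (k : Type) [Field k] (I : Ideal (Rk k)) (d : ℕ) (hd : 1 ≤ d)
    (hht : htI I = 2)
    (f : Fin 3 → Rk k) (hfhom : ∀ i, (f i).IsHomogeneous d)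
    (hfli : LinearIndependent k f) (hIf : I = Ideal.span (Set.range f))
    -- `I_d = (I^sat)_d`
    (hdeq : ∀ h : Rk k, h.IsHomogeneous d → (h ∈ I ↔ h ∈ sat I))
    -- `I^sat` is integrally closed
    (hic : ∀ x : Rk k, IdealIntegral (sat I) x → x ∈ sat I) :
    ∀ x : Rk k, x ∈ sat I ↔ IdealIntegral I x :=
  stmt15_general k I d hht f hfhom hfli hIf hdeq hic
end

section
/- Let R = k[x,y,z] be the polynomial ring over a field k. Then: (1) the ideals (x³, x²y, y²z) and (x³, xyz, yz²) are integrally closed; (2) for every d ≥ 4, neither I = (x^d, x^{d−1}y, y^{d−1}z) nor J = (x^d, xyz^{d−2}, yz^{d−1}) is integrally closed. Indeed, for even d ≥ 4, x^{d/2}y^{d/2}z ∉ I but (x^{d/2}y^{d/2}z)² ∈ I², and x^{d−1}y²z^{(d−2)/2} ∉ J but (x^{d−1}y²z^{(d−2)/2})² ∈ J²; for odd d ≥ 5, x^{(d−1)/2}y^{(d+1)/2}z ∉ I but its square lies in I², and x^{d−1}y²z^{(d−1)/2} ∉ J but its square lies in J². -/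
open MvPolynomial

/-- The ideal `(x^d, x^{d−1}y, y^{d−1}z)` of `R = k[x,y,z]`. -/
noncomputable def idlI (k : Type) [Field k] (d : ℕ) : Ideal (Rk k) :=
  Ideal.span {X 0 ^ d, X 0 ^ (d - 1) * X 1, X 1 ^ (d - 1) * X 2}

/-- The ideal `(x^d, xyz^{d−2}, yz^{d−1})` of `R = k[x,y,z]`. -/
noncomputable def idlJ (k : Type) [Field k] (d : ℕ) : Ideal (Rk k) :=
  Ideal.span {X 0 ^ d, X 0 * X 1 * X 2 ^ (d - 2), X 1 * X 2 ^ (d - 1)}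

/-- The ideal `(x³, x²y, y²z)` of `R = k[x,y,z]`. -/
noncomputable def idlA (k : Type) [Field k] : Ideal (Rk k) :=
  Ideal.span {X 0 ^ 3, X 0 ^ 2 * X 1, X 1 ^ 2 * X 2}

/-- The ideal `(x³, xyz, yz²)` of `R = k[x,y,z]`. -/
noncomputable def idlB (k : Type) [Field k] : Ideal (Rk k) :=
  Ideal.span {X 0 ^ 3, X 0 * X 1 * X 2, X 1 * X 2 ^ 2}

/-!
For a weight `w`, the `w`-weighted order of a polynomial is an additive valuation, and an element
`u` integral over an ideal `I ⊆ {v ≥ c}` again has `v u ≥ c`: otherwise, in an equation of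
integral dependence `u^m + a₁ u^(m-1) + ⋯ + a_m = 0` with `a_i ∈ I^i`, the term `u^m` would have
strictly smaller value than every other term. For `(x³, x²y, y²z)` the weights `(4,5,0)`, `(3,0,5)`
and for `(x³, xyz, yz²)` the weights `(2,5,0)`, `(4,0,6)` cut out the exponent set of the ideal
among lattice points, so every monomial of an integral element already lies in the ideal.

For `I` and `J`, each listed monomial `u` is divisible by no generator, while `u²` is divisible by
a product of two generators.
-/

open Finsupp

namespace AddValuation

variable {A : Type*} [CommRing A] (v : AddValuation A ℕ∞)

def geIdeal (c : ℕ∞) : Ideal A where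
  carrier := {a | c ≤ v a}
  zero_mem' := by simp
  add_mem' ha hb := v.map_le_add ha hb
  smul_mem' r a ha := by
    simp only [Set.mem_ofPred_eq, smul_eq_mul, map_mul] at ha ⊢
    exact ha.trans le_add_self

variable {v}

@[simp]
theorem mem_geIdeal {c : ℕ∞} {a : A} : a ∈ v.geIdeal c ↔ c ≤ v a := Iff.rfl

theorem geIdeal_mul_le (c c' : ℕ∞) : v.geIdeal c * v.geIdeal c' ≤ v.geIdeal (c + c') :=
  Ideal.mul_le.mpr fun a ha b hb => by
    rw [mem_geIdeal, map_mul]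
    exact add_le_add ha hb

theorem pow_le_geIdeal {I : Ideal A} {c : ℕ∞} (hI : I ≤ v.geIdeal c) (j : ℕ) :
    I ^ j ≤ v.geIdeal (j • c) := by
  induction j with
  | zero => simp [SetLike.le_def]
  | succ j ih =>
    rw [pow_succ, succ_nsmul]
    exact (Ideal.mul_mono ih hI).trans (geIdeal_mul_le _ _)

end AddValuation

namespace IdealIntegral

variable {A : Type} [CommRing A] {I : Ideal A} {u : A}

theorem mem_geIdeal (hu : IdealIntegral I u) {v : AddValuation A ℕ∞} {c : ℕ∞}
    (hI : I ≤ v.geIdeal c) : u ∈ v.geIdeal c := by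
  obtain ⟨m, a, -, ha, hsum⟩ := hu
  by_contra hlt
  have hvu : v u < c := not_le.mp hlt
  obtain ⟨n, hn⟩ := ENat.ne_top_iff_exists.mp hvu.ne_top
  have hc : (n + 1 : ℕ∞) ≤ c := Order.add_one_le_of_lt (hn ▸ hvu)
  have hterm (i : Fin m) : ((m * n : ℕ) : ℕ∞) < v (a i * u ^ (m - ((i : ℕ) + 1))) := by
    have hai : ((i : ℕ) + 1) • (n + 1 : ℕ∞) ≤ v (a i) :=
      (nsmul_le_nsmul_right hc _).trans (AddValuation.pow_le_geIdeal hI _ (ha i))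
    have hi := i.isLt
    rw [v.map_mul, v.map_pow, ← hn]
    calc ((m * n : ℕ) : ℕ∞) < (((i + 1) * (n + 1) + (m - (i + 1)) * n : ℕ) : ℕ∞) := by
          norm_cast
          have hm : m * n = ((i : ℕ) + 1) * n + (m - ((i : ℕ) + 1)) * n := by
            rw [← add_mul, Nat.add_sub_cancel' hi]
          rw [hm, mul_add_one]
          omega
      _ = ((i : ℕ) + 1) • (n + 1 : ℕ∞) + (m - ((i : ℕ) + 1)) • (n : ℕ∞) := by
          push_cast [nsmul_eq_mul]
          ring
      _ ≤ _ := by gcongr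
  have hlt := v.map_lt_sum (s := Finset.univ) (ENat.natCast_ne_top _) fun i _ => hterm i
  rw [← v.map_neg, ← eq_neg_of_add_eq_zero_left hsum, v.map_pow, ← hn, nsmul_eq_mul] at hlt
  norm_cast at hlt
  exact lt_irrefl _ hlt

theorem of_sq_mem_sq (hu : u ^ 2 ∈ I ^ 2) : IdealIntegral I u :=
  ⟨2, ![0, -u ^ 2], two_pos, Fin.forall_fin_two.mpr ⟨by simp, by simpa using hu⟩,
    by simp [Fin.sum_univ_two]⟩

end IdealIntegral

theorem not_forall_idealIntegral_mem {A : Type} [CommRing A] {I : Ideal A} {u : A}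
    (hu : u ∉ I) (hu2 : u ^ 2 ∈ I ^ 2) : ¬ ∀ v : A, IdealIntegral I v → v ∈ I :=
  fun h => hu (h u (IdealIntegral.of_sq_mem_sq hu2))

namespace MvPolynomial

section CommSemiring

variable {σ R : Type*} [CommSemiring R]

theorem monomial_mem_span_monomial_image_iff [Nontrivial R] {s : σ →₀ ℕ} {T : Set (σ →₀ ℕ)} :
    monomial s (1 : R) ∈ Ideal.span ((fun t => monomial t (1 : R)) '' T) ↔ ∃ t ∈ T, t ≤ s := by
  classical
  simp [mem_ideal_span_monomial_image, support_monomial]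

theorem sq_monomial_mem_sq {I : Ideal (MvPolynomial σ R)} {s t₁ t₂ : σ →₀ ℕ}
    (h₁ : monomial t₁ (1 : R) ∈ I) (h₂ : monomial t₂ (1 : R) ∈ I) (h : t₁ + t₂ ≤ s + s) :
    monomial s (1 : R) ^ 2 ∈ I ^ 2 := by
  have hs : monomial s (1 : R) ^ 2 =
      monomial (s + s - (t₁ + t₂)) 1 * (monomial t₁ 1 * monomial t₂ 1) := by
    rw [sq, monomial_mul, monomial_mul, monomial_mul, tsub_add_cancel_of_le h]
    simp
  rw [hs, sq]
  exact Ideal.mul_mem_left _ _ (Ideal.mul_mem_mul h₁ h₂)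

end CommSemiring

section Domain

variable {σ R : Type*} [CommRing R] [IsDomain R]

noncomputable def weightedOrderAddValuation (w : σ → ℕ) : AddValuation (MvPolynomial σ R) ℕ∞ :=
  AddValuation.of (fun f => MvPowerSeries.weightedOrder w (f : MvPowerSeries σ R))
    (by simp) (by simp [MvPowerSeries.weightedOrder_one])
    (fun f g => by simpa using MvPowerSeries.min_weightedOrder_le_add w)
    (fun f g => by simp [MvPowerSeries.weightedOrder_mul])

theorem weightedOrderAddValuation_monomial_one (w : σ → ℕ) (s : σ →₀ ℕ) :
    weightedOrderAddValuation w (monomial s (1 : R)) = weight w s := by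
  simp [weightedOrderAddValuation, MvPowerSeries.weightedOrder_monomial_of_ne_zero]

theorem le_weight_of_le_weightedOrderAddValuation {w : σ → ℕ} {c : ℕ} {f : MvPolynomial σ R}
    (hf : (c : ℕ∞) ≤ weightedOrderAddValuation w f) {s : σ →₀ ℕ} (hs : s ∈ f.support) :
    c ≤ weight w s := by
  exact_mod_cast hf.trans (MvPowerSeries.weightedOrder_le w (by simpa [coeff_coe] using hs))

theorem span_monomial_le_geIdeal {w : σ → ℕ} {c : ℕ} {T : Set (σ →₀ ℕ)}
    (hT : ∀ t ∈ T, c ≤ weight w t) :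
    Ideal.span ((fun t => monomial t (1 : R)) '' T) ≤ (weightedOrderAddValuation w).geIdeal c := by
  rw [Ideal.span_le]
  rintro _ ⟨t, ht, rfl⟩
  simpa [weightedOrderAddValuation_monomial_one] using hT t ht

end Domain

end MvPolynomial

theorem IdealIntegral.le_weight_of_mem_support {σ R : Type} [CommRing R] [IsDomain R]
    {w : σ → ℕ} {c : ℕ} {T : Set (σ →₀ ℕ)} (hT : ∀ t ∈ T, c ≤ weight w t) {u : MvPolynomial σ R}
    (hu : IdealIntegral (Ideal.span ((fun t => monomial t (1 : R)) '' T)) u)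
    {s : σ →₀ ℕ} (hs : s ∈ u.support) : c ≤ weight w s :=
  le_weight_of_le_weightedOrderAddValuation (hu.mem_geIdeal (span_monomial_le_geIdeal hT)) hs

noncomputable def expVec (a b c : ℕ) : Fin 3 →₀ ℕ := Finsupp.equivFunOnFinite.symm ![a, b, c]

@[simp] theorem expVec_apply_zero (a b c : ℕ) : expVec a b c 0 = a := rfl
@[simp] theorem expVec_apply_one (a b c : ℕ) : expVec a b c 1 = b := rfl
@[simp] theorem expVec_apply_two (a b c : ℕ) : expVec a b c 2 = c := rfl

theorem expVec_le_iff {a b c : ℕ} {s : Fin 3 →₀ ℕ} :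
    expVec a b c ≤ s ↔ a ≤ s 0 ∧ b ≤ s 1 ∧ c ≤ s 2 := by
  simp [Finsupp.le_def, Fin.forall_fin_succ]

theorem expVec_add (a b c a' b' c' : ℕ) :
    expVec a b c + expVec a' b' c' = expVec (a + a') (b + b') (c + c') := by
  ext i
  fin_cases i <;> rfl

theorem weight_fin_three (w : Fin 3 → ℕ) (s : Fin 3 →₀ ℕ) :
    weight w s = s 0 * w 0 + s 1 * w 1 + s 2 * w 2 := by
  simp [weight_apply, Finsupp.sum_fintype, Fin.sum_univ_three]

section ThreeVariables

variable {k : Type} [Field k]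

theorem monomial_expVec (a b c : ℕ) :
    monomial (expVec a b c) (1 : k) = X 0 ^ a * X 1 ^ b * X 2 ^ c := by
  simp [monomial_eq, Finsupp.prod_fintype, Fin.prod_univ_three]

theorem idlA_eq_span_monomial : idlA k =
    Ideal.span ((fun t => monomial t 1) '' {expVec 3 0 0, expVec 2 1 0, expVec 0 2 1}) := by
  simp [idlA, Set.image_insert_eq, monomial_expVec]

theorem idlB_eq_span_monomial : idlB k =
    Ideal.span ((fun t => monomial t 1) '' {expVec 3 0 0, expVec 1 1 1, expVec 0 1 2}) := by
  simp [idlB, Set.image_insert_eq, monomial_expVec]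

theorem idlI_eq_span_monomial (d : ℕ) : idlI k d = Ideal.span
    ((fun t => monomial t 1) '' {expVec d 0 0, expVec (d - 1) 1 0, expVec 0 (d - 1) 1}) := by
  simp [idlI, Set.image_insert_eq, monomial_expVec]

theorem idlJ_eq_span_monomial (d : ℕ) : idlJ k d = Ideal.span
    ((fun t => monomial t 1) '' {expVec d 0 0, expVec 1 1 (d - 2), expVec 0 1 (d - 1)}) := by
  simp [idlJ, Set.image_insert_eq, monomial_expVec]

theorem mem_idlA_of_idealIntegral (u : Rk k) (hu : IdealIntegral (idlA k) u) : u ∈ idlA k := by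
  rw [idlA_eq_span_monomial] at hu ⊢
  refine mem_ideal_span_monomial_image.mpr fun s hs => ?_
  have h₁ := hu.le_weight_of_mem_support (w := ![4, 5, 0]) (c := 10) (by simp [weight_fin_three]) hs
  have h₂ := hu.le_weight_of_mem_support (w := ![3, 0, 5]) (c := 5) (by simp [weight_fin_three]) hs
  simp [weight_fin_three] at h₁ h₂
  simp [expVec_le_iff]
  omega

theorem mem_idlB_of_idealIntegral (u : Rk k) (hu : IdealIntegral (idlB k) u) : u ∈ idlB k := by
  rw [idlB_eq_span_monomial] at hu ⊢
  refine mem_ideal_span_monomial_image.mpr fun s hs => ?_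
  have h₁ := hu.le_weight_of_mem_support (w := ![2, 5, 0]) (c := 5) (by simp [weight_fin_three]) hs
  have h₂ := hu.le_weight_of_mem_support (w := ![4, 0, 6]) (c := 10) (by simp [weight_fin_three]) hs
  simp [weight_fin_three] at h₁ h₂
  simp [expVec_le_iff]
  omega

theorem X_pow_mul_mem_idlI_iff {a b c d : ℕ} : X 0 ^ a * X 1 ^ b * X 2 ^ c ∈ idlI k d ↔
    d ≤ a ∨ (d - 1 ≤ a ∧ 1 ≤ b) ∨ (d - 1 ≤ b ∧ 1 ≤ c) := by
  rw [← monomial_expVec, idlI_eq_span_monomial, monomial_mem_span_monomial_image_iff]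
  simp [expVec_le_iff]

theorem X_pow_mul_mem_idlJ_iff {a b c d : ℕ} : X 0 ^ a * X 1 ^ b * X 2 ^ c ∈ idlJ k d ↔
    d ≤ a ∨ (1 ≤ a ∧ 1 ≤ b ∧ d - 2 ≤ c) ∨ (1 ≤ b ∧ d - 1 ≤ c) := by
  rw [← monomial_expVec, idlJ_eq_span_monomial, monomial_mem_span_monomial_image_iff]
  simp [expVec_le_iff]

theorem sq_X_pow_mul_mem_idlI_sq {a b c d : ℕ} (hd : 1 ≤ d) (ha : d - 1 ≤ 2 * a)
    (hb : d ≤ 2 * b) (hc : 1 ≤ 2 * c) : (X 0 ^ a * X 1 ^ b * X 2 ^ c) ^ 2 ∈ idlI k d ^ 2 := by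
  rw [← monomial_expVec]
  refine sq_monomial_mem_sq (t₁ := expVec (d - 1) 1 0) (t₂ := expVec 0 (d - 1) 1) ?_ ?_ ?_
  · rw [monomial_expVec, X_pow_mul_mem_idlI_iff]
    omega
  · rw [monomial_expVec, X_pow_mul_mem_idlI_iff]
    omega
  · rw [expVec_add, expVec_add, expVec_le_iff]
    simp only [expVec_apply_zero, expVec_apply_one, expVec_apply_two]
    omega

theorem sq_X_pow_mul_mem_idlJ_sq {a b c d : ℕ} (ha : d + 1 ≤ 2 * a) (hb : 1 ≤ 2 * b)
    (hc : d - 2 ≤ 2 * c) : (X 0 ^ a * X 1 ^ b * X 2 ^ c) ^ 2 ∈ idlJ k d ^ 2 := by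
  rw [← monomial_expVec]
  refine sq_monomial_mem_sq (t₁ := expVec d 0 0) (t₂ := expVec 1 1 (d - 2)) ?_ ?_ ?_
  · rw [monomial_expVec, X_pow_mul_mem_idlJ_iff]
    omega
  · rw [monomial_expVec, X_pow_mul_mem_idlJ_iff]
    omega
  · rw [expVec_add, expVec_add, expVec_le_iff]
    simp only [expVec_apply_zero, expVec_apply_one, expVec_apply_two]
    omega

end ThreeVariables

/-- In `R = k[x,y,z]`:
(1) the ideals `(x³, x²y, y²z)` and `(x³, xyz, yz²)` are integrally closed;
(2) for every `d ≥ 4`, neither `I = (x^d, x^{d−1}y, y^{d−1}z)` nor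
`J = (x^d, xyz^{d−2}, yz^{d−1})` is integrally closed, with the indicated
witnesses: for even `d ≥ 4`, `x^{d/2}y^{d/2}z ∉ I` but its square lies in `I²`,
and `x^{d−1}y²z^{(d−2)/2} ∉ J` but its square lies in `J²`; for odd `d ≥ 5`,
`x^{(d−1)/2}y^{(d+1)/2}z ∉ I` but its square lies in `I²`, and
`x^{d−1}y²z^{(d−1)/2} ∉ J` but its square lies in `J²`. -/
theorem stmt16 (k : Type) [Field k] :
    -- (1)
    (∀ u : Rk k, IdealIntegral (idlA k) u → u ∈ idlA k) ∧
    (∀ u : Rk k, IdealIntegral (idlB k) u → u ∈ idlB k) ∧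
    -- (2)
    (∀ d : ℕ, 4 ≤ d →
      (¬ ∀ u : Rk k, IdealIntegral (idlI k d) u → u ∈ idlI k d) ∧
      (¬ ∀ u : Rk k, IdealIntegral (idlJ k d) u → u ∈ idlJ k d) ∧
      (Even d →
        X 0 ^ (d / 2) * X 1 ^ (d / 2) * X 2 ∉ idlI k d ∧
        (X 0 ^ (d / 2) * X 1 ^ (d / 2) * X 2) ^ 2 ∈ (idlI k d) ^ 2 ∧
        X 0 ^ (d - 1) * X 1 ^ 2 * X 2 ^ ((d - 2) / 2) ∉ idlJ k d ∧
        (X 0 ^ (d - 1) * X 1 ^ 2 * X 2 ^ ((d - 2) / 2)) ^ 2 ∈ (idlJ k d) ^ 2) ∧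
      (Odd d →
        X 0 ^ ((d - 1) / 2) * X 1 ^ ((d + 1) / 2) * X 2 ∉ idlI k d ∧
        (X 0 ^ ((d - 1) / 2) * X 1 ^ ((d + 1) / 2) * X 2) ^ 2 ∈ (idlI k d) ^ 2 ∧
        X 0 ^ (d - 1) * X 1 ^ 2 * X 2 ^ ((d - 1) / 2) ∉ idlJ k d ∧
        (X 0 ^ (d - 1) * X 1 ^ 2 * X 2 ^ ((d - 1) / 2)) ^ 2 ∈ (idlJ k d) ^ 2)) := by
  refine ⟨mem_idlA_of_idealIntegral, mem_idlB_of_idealIntegral, fun d hd => ?_⟩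
  have hI (a b : ℕ) (ha : d ≤ 2 * a + 1) (ha' : a + 2 ≤ d) (hb : d ≤ 2 * b) (hb' : b + 2 ≤ d) :
      X 0 ^ a * X 1 ^ b * X 2 ∉ idlI k d ∧ (X 0 ^ a * X 1 ^ b * X 2) ^ 2 ∈ idlI k d ^ 2 := by
    rw [← pow_one (X 2 : Rk k), X_pow_mul_mem_idlI_iff]
    exact ⟨by omega, sq_X_pow_mul_mem_idlI_sq (by omega) (by omega) hb (by norm_num)⟩
  have hJ (c : ℕ) (hc : d ≤ 2 * c + 2) (hc' : c + 3 ≤ d) :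
      X 0 ^ (d - 1) * X 1 ^ 2 * X 2 ^ c ∉ idlJ k d ∧
        (X 0 ^ (d - 1) * X 1 ^ 2 * X 2 ^ c) ^ 2 ∈ idlJ k d ^ 2 := by
    rw [X_pow_mul_mem_idlJ_iff]
    exact ⟨by omega, sq_X_pow_mul_mem_idlJ_sq (by omega) (by omega) (by omega)⟩
  obtain ⟨hIn, hIsq⟩ := hI (d / 2) ((d + 1) / 2) (by omega) (by omega) (by omega) (by omega)
  obtain ⟨hJn, hJsq⟩ := hJ ((d - 1) / 2) (by omega) (by omega)
  refine ⟨not_forall_idealIntegral_mem hIn hIsq, not_forall_idealIntegral_mem hJn hJsq,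
    fun he => ?_, fun ho => ?_⟩
  · rw [Nat.even_iff] at he
    obtain ⟨hIn, hIsq⟩ := hI (d / 2) (d / 2) (by omega) (by omega) (by omega) (by omega)
    obtain ⟨hJn, hJsq⟩ := hJ ((d - 2) / 2) (by omega) (by omega)
    exact ⟨hIn, hIsq, hJn, hJsq⟩
  · rw [Nat.odd_iff] at ho
    obtain ⟨hIn, hIsq⟩ := hI ((d - 1) / 2) ((d + 1) / 2) (by omega) (by omega) (by omega) (by omega)
    exact ⟨hIn, hIsq, hJn, hJsq⟩
end
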